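/- arXiv:2310.04775 — 2 statements merged into one kernel-verified Lean document; each statement's English description precedes it below -/
import Mathlib

section
/- Let P be a probability measure on [q_min, q_max] with standard deviation exactly (q_max − q_min)/2. Then P = (1/2)δ_{q_min} + (1/2)δ_{q_max}, i.e., P assigns mass 1/2 to each endpoint. -/
/-!
For `X` with values in `[a, b]`, integrating `(b - X) (X - a) ≥ 0` gives
`Var X + 𝔼[(b - X) (X - a)] = ((b - a) / 2) ^ 2 - (𝔼 X - (a + b) / 2) ^ 2`.
If `Var X = ((b - a) / 2) ^ 2`, both nonnegative quantities `𝔼[(b - X) (X - a)]` and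
`(𝔼 X - (a + b) / 2) ^ 2` vanish: `X` takes only the values `a` and `b`, and its mean is the
midpoint, which forces the weights `1 / 2`.
-/

open MeasureTheory ProbabilityTheory

section BoundedVariance

variable {Ω : Type*} [MeasurableSpace Ω] {μ : Measure Ω} [IsProbabilityMeasure μ]
  {a b : ℝ} {X : Ω → ℝ}

lemma variance_add_integral_sub_mul_sub (h : ∀ᵐ ω ∂μ, X ω ∈ Set.Icc a b)
    (hX : AEMeasurable X μ) :
    Var[X; μ] + ∫ ω, (b - X ω) * (X ω - a) ∂μ = (b - μ[X]) * (μ[X] - a) := by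
  have hX₂ : MemLp X 2 μ := memLp_of_bounded h hX.aestronglyMeasurable 2
  have hint₁ : Integrable X μ := hX₂.integrable one_le_two
  have hint₂ : Integrable (fun ω ↦ X ω ^ 2) μ := hX₂.integrable_sq
  have hexpand : ∫ ω, (b - X ω) * (X ω - a) ∂μ = -μ[X ^ 2] + (a + b) * μ[X] - a * b := by
    calc ∫ ω, (b - X ω) * (X ω - a) ∂μ
        = ∫ ω, ((a + b) * X ω - X ω ^ 2) - a * b ∂μ := by congr with ω; ring
      _ = -μ[X ^ 2] + (a + b) * μ[X] - a * b := by
        rw [integral_sub (by fun_prop) (by fun_prop), integral_sub (by fun_prop) hint₂,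
          integral_const_mul]
        simp only [Pi.pow_apply, integral_const, probReal_univ, smul_eq_mul, one_mul]
        ring
  rw [variance_eq_sub hX₂, hexpand]
  ring

lemma integral_eq_and_ae_eq_or_eq_of_variance_eq_sq (h : ∀ᵐ ω ∂μ, X ω ∈ Set.Icc a b)
    (hX : AEMeasurable X μ) (hvar : Var[X; μ] = ((b - a) / 2) ^ 2) :
    μ[X] = (a + b) / 2 ∧ ∀ᵐ ω ∂μ, X ω = a ∨ X ω = b := by
  have hgap := variance_add_integral_sub_mul_sub h hX
  have hnonneg : 0 ≤ᵐ[μ] fun ω ↦ (b - X ω) * (X ω - a) := by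
    filter_upwards [h] with ω hω
    exact mul_nonneg (sub_nonneg.2 hω.2) (sub_nonneg.2 hω.1)
  have hsum : ∫ ω, (b - X ω) * (X ω - a) ∂μ + (μ[X] - (a + b) / 2) ^ 2 = 0 := by
    linear_combination hgap - hvar
  have hint_zero : ∫ ω, (b - X ω) * (X ω - a) ∂μ = 0 := by
    nlinarith [integral_nonneg_of_ae hnonneg, sq_nonneg (μ[X] - (a + b) / 2)]
  have hX₂ : MemLp X 2 μ := memLp_of_bounded h hX.aestronglyMeasurable 2
  have hint : Integrable (fun ω ↦ (b - X ω) * (X ω - a)) μ :=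
    ((memLp_const b).sub hX₂).integrable_mul (hX₂.sub (memLp_const a))
  refine ⟨by nlinarith [sq_nonneg (μ[X] - (a + b) / 2)], ?_⟩
  filter_upwards [(integral_eq_zero_iff_of_nonneg_ae hnonneg hint).1 hint_zero] with ω hω
  rcases mul_eq_zero.1 hω with hb | ha
  · exact Or.inr (sub_eq_zero.1 hb).symm
  · exact Or.inl (sub_eq_zero.1 ha)

lemma measureReal_preimage_singleton_of_ae_eq_or_eq (hab : a ≠ b) (hXm : Measurable X)
    (h : ∀ᵐ ω ∂μ, X ω = a ∨ X ω = b) :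
    μ.real (X ⁻¹' {b}) = (μ[X] - a) / (b - a) := by
  have hba : b - a ≠ 0 := sub_ne_zero.2 hab.symm
  have hXi : Integrable X μ := by
    refine .of_mem_Icc (min a b) (max a b) hXm.aemeasurable (h.mono fun ω hω ↦ ?_)
    rcases hω with hω | hω <;> simp [hω]
  rw [← integral_indicator_one (hXm (measurableSet_singleton b))]
  calc ∫ ω, (X ⁻¹' {b}).indicator 1 ω ∂μ = ∫ ω, (X ω - a) / (b - a) ∂μ := by
        refine integral_congr_ae ?_
        filter_upwards [h] with ω hω
        rcases hω with hω | hω <;> simp [hω, hab, hba]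
    _ = (μ[X] - a) / (b - a) := by
        rw [integral_div, integral_sub hXi (integrable_const a)]
        simp

end BoundedVariance

lemma MeasureTheory.Measure.eq_smul_dirac_add_smul_dirac {α : Type*} [MeasurableSpace α]
    [MeasurableSingletonClass α] {μ : Measure α} {x y : α} (hxy : x ≠ y)
    (h : ∀ᵐ z ∂μ, z = x ∨ z = y) :
    μ = μ {x} • Measure.dirac x + μ {y} • Measure.dirac y := by
  calc μ = μ.restrict ({x} ∪ {y}) := (Measure.restrict_eq_self_of_ae_mem h).symm
    _ = μ {x} • Measure.dirac x + μ {y} • Measure.dirac y := by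
      rw [Measure.restrict_union (Set.disjoint_singleton.2 hxy) (measurableSet_singleton y),
        Measure.restrict_singleton, Measure.restrict_singleton]

lemma measure_singleton_eq_half_of_integral_eq_midpoint {P : Measure ℝ}
    [IsProbabilityMeasure P] {x y : ℝ} (hxy : x ≠ y) (h : ∀ᵐ q ∂P, q = x ∨ q = y)
    (hmid : ∫ q, q ∂P = (x + y) / 2) :
    P {y} = 1 / 2 := by
  have hy : P.real {y} = ((∫ q, q ∂P) - x) / (y - x) :=
    measureReal_preimage_singleton_of_ae_eq_or_eq hxy measurable_id h
  have hhalf : ((x + y) / 2 - x) / (y - x) = 1 / 2 := by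
    field_simp [sub_ne_zero.2 hxy.symm]
    ring
  rw [← ofReal_measureReal, hy, hmid, hhalf]
  simp

theorem std_eq_half_range_iff_two_point_general (P : Measure ℝ) [IsProbabilityMeasure P]
    (qmin qmax : ℝ)
    (hsupp : P (Set.Icc qmin qmax) = 1)
    (heq : Real.sqrt ((∫ q, q ^ 2 ∂P) - (∫ q, q ∂P) ^ 2) = (qmax - qmin) / 2) :
    P = (1 / 2 : ENNReal) • Measure.dirac qmin +
        (1 / 2 : ENNReal) • Measure.dirac qmax := by
  have hae : ∀ᵐ q ∂P, q ∈ Set.Icc qmin qmax :=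
    (mem_ae_iff_prob_eq_one measurableSet_Icc).2 hsupp
  have hvar_eq : Var[id; P] = ∫ q, q ^ 2 ∂P - (∫ q, q ∂P) ^ 2 :=
    variance_eq_sub (memLp_of_bounded hae aestronglyMeasurable_id 2)
  have hvar : Var[id; P] = ((qmax - qmin) / 2) ^ 2 := by
    rw [← heq, Real.sq_sqrt (hvar_eq ▸ variance_nonneg _ _), hvar_eq]
  obtain ⟨hmean, hpair⟩ :=
    integral_eq_and_ae_eq_or_eq_of_variance_eq_sq hae aemeasurable_id hvar
  rcases eq_or_ne qmin qmax with rfl | hne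
  · have hP : P = P {qmin} • Measure.dirac qmin := by
      rw [← Measure.restrict_singleton,
        Measure.restrict_eq_self_of_ae_mem (Set.Icc_self qmin ▸ hae)]
    rw [hP, ← Set.Icc_self, hsupp, one_smul, ← add_smul, ENNReal.add_halves, one_smul]
  · rw [Measure.eq_smul_dirac_add_smul_dirac hne hpair,
      measure_singleton_eq_half_of_integral_eq_midpoint hne hpair hmean,
      measure_singleton_eq_half_of_integral_eq_midpoint hne.symm (hpair.mono fun _ ↦ Or.symm)
        (by rw [hmean, add_comm])]

/-- Equality case of the Popoviciu variance bound: if the standard deviation of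
a probability measure on [q_min, q_max] equals (q_max − q_min)/2, then the
measure is the equal mixture of the Dirac measures at the endpoints. -/
theorem std_eq_half_range_iff_two_point (P : Measure ℝ) [IsProbabilityMeasure P]
    (qmin qmax : ℝ) (hle : qmin ≤ qmax)
    (hsupp : P (Set.Icc qmin qmax) = 1)
    (heq : Real.sqrt ((∫ q, q ^ 2 ∂P) - (∫ q, q ∂P) ^ 2) = (qmax - qmin) / 2) :
    P = (1 / 2 : ENNReal) • Measure.dirac qmin +
        (1 / 2 : ENNReal) • Measure.dirac qmax :=
  std_eq_half_range_iff_two_point_general P qmin qmax hsupp heq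
end

section
/- Consider the random energy model at β ≥ β_c = 2√(log 2). Assume the infinite-volume free energies exist with f(β) = −√(log 2) for β ≥ β_c (so f(β) = f(2β) when β ≥ β_c), and define f^{(2)}(β,λ) = −lim_N (βN)^{−1} E log Z_N^{(2)}(β,λ), a concave function of λ with f^{(2)}(β,0) = 2f(β). Then the right derivative satisfies −lim_{λ↓0} ∂f^{(2)}(β,λ)/∂λ ≥ 1; combined with the trivial bound that this derivative limit is at most 1 (since |R| ≤ 1), it equals 1. -/
open Finset Filter MeasureTheory

/-- Spin value of a Boolean configuration entry. -/
noncomputable def spin (b : Bool) : ℝ := if b then 1 else -1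

/-- Single-replica REM partition function for energies E. -/
noncomputable def remZ (N : ℕ) (β : ℝ) (E : (Fin N → Bool) → ℝ) : ℝ :=
  ∑ σ : Fin N → Bool, Real.exp (-β * E σ)

/-- Two-replica REM partition function with replica coupling λ. -/
noncomputable def remZ2 (N : ℕ) (β lam : ℝ) (E : (Fin N → Bool) → ℝ) : ℝ :=
  ∑ σ1 : Fin N → Bool, ∑ σ2 : Fin N → Bool,
    Real.exp (-β * E σ1 - β * E σ2 + β * lam * ∑ j, spin (σ1 j) * spin (σ2 j))

open Topology

/-!
Forcing the two replicas onto the diagonal gives `Z⁽²⁾_N(β, λ) ≥ e^{βλN} Z_N(2β)`, and `|R| ≤ 1`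
gives `Z⁽²⁾_N(β, λ) ≤ e^{βλN} Z⁽²⁾_N(β, 0)`. In the limit, for `λ > 0`,
`f⁽²⁾(β, 0) - λ ≤ f⁽²⁾(β, λ) ≤ 2 f(2β) - λ`, and the two ends agree because
`f⁽²⁾(β, 0) = 2 f(β) = -2√(log 2) = 2 f(2β)` for `β ≥ β_c`. So `f⁽²⁾(β, ·)` is exactly
`λ ↦ f⁽²⁾(β, 0) - λ` to the right of `0`, and its right derivative is `-1`.
-/

lemma spin_mul_self (b : Bool) : spin b * spin b = 1 := by
  cases b <;> simp [spin]

lemma spin_mul_le_one (a b : Bool) : spin a * spin b ≤ 1 := by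
  cases a <;> cases b <;> simp [spin]

section PartitionFunction

variable {N : ℕ} (β lam : ℝ) (E : (Fin N → Bool) → ℝ)

lemma remZ_pos : 0 < remZ N β E :=
  sum_pos (fun _ _ => Real.exp_pos _) univ_nonempty

lemma remZ2_pos : 0 < remZ2 N β lam E :=
  sum_pos (fun _ _ => sum_pos (fun _ _ => Real.exp_pos _) univ_nonempty) univ_nonempty

lemma sum_spin_mul_le (σ τ : Fin N → Bool) : ∑ j, spin (σ j) * spin (τ j) ≤ N := by
  simpa using sum_le_sum fun j (_ : j ∈ univ) => spin_mul_le_one (σ j) (τ j)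

lemma sum_spin_mul_self (σ : Fin N → Bool) : ∑ j, spin (σ j) * spin (σ j) = N := by
  simp [spin_mul_self]

lemma exp_mul_remZ_le_remZ2 : Real.exp (β * N * lam) * remZ N (2 * β) E ≤ remZ2 N β lam E := by
  rw [remZ, remZ2, mul_sum]
  refine sum_le_sum fun σ _ => ?_
  calc Real.exp (β * N * lam) * Real.exp (-(2 * β) * E σ)
      = Real.exp (-β * E σ - β * E σ + β * lam * ∑ j, spin (σ j) * spin (σ j)) := by
        rw [← Real.exp_add, sum_spin_mul_self]
        ring_nf
    _ ≤ _ := single_le_sum (f := fun τ => Real.exp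
          (-β * E σ - β * E τ + β * lam * ∑ j, spin (σ j) * spin (τ j)))
        (fun _ _ => (Real.exp_pos _).le) (mem_univ σ)

lemma remZ2_le_exp_mul_remZ2_zero (hβlam : 0 ≤ β * lam) :
    remZ2 N β lam E ≤ Real.exp (β * N * lam) * remZ2 N β 0 E := by
  rw [remZ2, remZ2, mul_sum]
  refine sum_le_sum fun σ _ => ?_
  rw [mul_sum]
  refine sum_le_sum fun τ _ => ?_
  rw [← Real.exp_add, Real.exp_le_exp]
  nlinarith [mul_le_mul_of_nonneg_left (sum_spin_mul_le σ τ) hβlam]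

lemma add_log_remZ_le_log_remZ2 :
    β * N * lam + Real.log (remZ N (2 * β) E) ≤ Real.log (remZ2 N β lam E) := by
  rw [Real.le_log_iff_exp_le (remZ2_pos β lam E), Real.exp_add,
    Real.exp_log (remZ_pos _ E)]
  exact exp_mul_remZ_le_remZ2 β lam E

lemma log_remZ2_le (hβlam : 0 ≤ β * lam) :
    Real.log (remZ2 N β lam E) ≤ β * N * lam + Real.log (remZ2 N β 0 E) := by
  rw [Real.log_le_iff_le_exp (remZ2_pos β lam E), Real.exp_add,
    Real.exp_log (remZ2_pos β 0 E)]
  exact remZ2_le_exp_mul_remZ2_zero β lam E hβlam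

end PartitionFunction

section FreeEnergy

variable {Ω : Type*} [MeasurableSpace Ω] (μ : Measure Ω) (En : (N : ℕ) → Ω → (Fin N → Bool) → ℝ)

noncomputable def remFreeEnergy (β : ℝ) (N : ℕ) : ℝ :=
  -(1 / (β * N)) * ∫ ω, Real.log (remZ N β (En N ω)) ∂μ

noncomputable def remFreeEnergy2 (β lam : ℝ) (N : ℕ) : ℝ :=
  -(1 / (β * N)) * ∫ ω, Real.log (remZ2 N β lam (En N ω)) ∂μ

variable {μ}

lemma neg_one_div_mul_integral_le [IsProbabilityMeasure μ] {c t : ℝ} (hc : 0 < c)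
    {u v : Ω → ℝ} (hu : Integrable u μ) (hv : Integrable v μ) (huv : ∀ ω, c * t + u ω ≤ v ω) :
    -(1 / c) * ∫ ω, v ω ∂μ ≤ -(1 / c) * ∫ ω, u ω ∂μ - t := by
  have hint : c * t + ∫ ω, u ω ∂μ ≤ ∫ ω, v ω ∂μ := by
    simpa [integral_add (integrable_const _) hu] using
      integral_mono ((integrable_const (c * t)).add hu) hv huv
  have : t + (1 / c) * ∫ ω, u ω ∂μ ≤ (1 / c) * ∫ ω, v ω ∂μ := by
    calc t + (1 / c) * ∫ ω, u ω ∂μ = (1 / c) * (c * t + ∫ ω, u ω ∂μ) := by field_simp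
      _ ≤ _ := by gcongr
  linarith

/-- Since `∫ f ∂μ = 0` for non-integrable `f`, a nonzero limit certifies integrability. -/
lemma eventually_integrable_of_tendsto {c : ℕ → ℝ} {F : ℕ → Ω → ℝ} {a : ℝ} (ha : a ≠ 0)
    (h : Tendsto (fun N => c N * ∫ ω, F N ω ∂μ) atTop (𝓝 a)) :
    ∀ᶠ N in atTop, Integrable (F N) μ := by
  filter_upwards [h.eventually_ne ha] with N hN
  by_contra hF
  rw [integral_undef hF, mul_zero] at hN
  exact hN rfl

variable [IsProbabilityMeasure μ] {β lam : ℝ} {N : ℕ}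

lemma remFreeEnergy2_zero_sub_le (hβ : 0 < β) (hlam : 0 ≤ lam) (hN : 0 < N)
    (h0 : Integrable (fun ω => Real.log (remZ2 N β 0 (En N ω))) μ)
    (hl : Integrable (fun ω => Real.log (remZ2 N β lam (En N ω))) μ) :
    remFreeEnergy2 μ En β 0 N - lam ≤ remFreeEnergy2 μ En β lam N := by
  have := neg_one_div_mul_integral_le (c := β * N) (t := -lam) (by positivity) hl h0 fun ω =>
    by linarith [log_remZ2_le β lam (En N ω) (by positivity)]
  unfold remFreeEnergy2
  linarith

lemma remFreeEnergy2_le (hβ : 0 < β) (hN : 0 < N)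
    (hZ : Integrable (fun ω => Real.log (remZ N (2 * β) (En N ω))) μ)
    (hl : Integrable (fun ω => Real.log (remZ2 N β lam (En N ω))) μ) :
    remFreeEnergy2 μ En β lam N ≤ 2 * remFreeEnergy μ En (2 * β) N - lam := by
  have := neg_one_div_mul_integral_le (c := β * N) (t := lam) (by positivity) hZ hl fun ω =>
    by linarith [add_log_remZ_le_log_remZ2 β lam (En N ω)]
  have hscale : 2 * remFreeEnergy μ En (2 * β) N
      = -(1 / (β * N)) * ∫ ω, Real.log (remZ N (2 * β) (En N ω)) ∂μ := by
    unfold remFreeEnergy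
    field_simp
  rwa [hscale]

lemma remFreeEnergy2_limit_sandwich (hβ : 0 < β) (hlam : 0 ≤ lam) {f2 : ℝ → ℝ} {f : ℝ}
    (hZ : Tendsto (remFreeEnergy μ En (2 * β)) atTop (𝓝 f))
    (hf2 : ∀ lam, Tendsto (remFreeEnergy2 μ En β lam) atTop (𝓝 (f2 lam)))
    (hf : f ≠ 0) (hf20 : f2 0 ≠ 0) (hf2lam : f2 lam ≠ 0) :
    f2 0 - lam ≤ f2 lam ∧ f2 lam ≤ 2 * f - lam := by
  have hint := (eventually_integrable_of_tendsto hf20 (hf2 0)).and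
    ((eventually_integrable_of_tendsto hf hZ).and
      ((eventually_integrable_of_tendsto hf2lam (hf2 lam)).and (eventually_gt_atTop 0)))
  constructor
  · refine le_of_tendsto_of_tendsto ((hf2 0).sub_const lam) (hf2 lam) ?_
    filter_upwards [hint] with N ⟨h0, _, hl, hN⟩
    exact remFreeEnergy2_zero_sub_le En hβ hlam hN h0 hl
  · refine le_of_tendsto_of_tendsto (hf2 lam) ((hZ.const_mul 2).sub_const lam) ?_
    filter_upwards [hint] with N ⟨_, hZN, hl, hN⟩
    exact remFreeEnergy2_le En hβ hN hZN hl

end FreeEnergy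

/-- A function that is nonzero at `0` and has a right derivative there is nonzero just to the
right of `0`, where the hypothesis pins it to `h 0 - x`. -/
lemma eq_neg_one_of_tendsto_slope {h : ℝ → ℝ} {g : ℝ} (h0 : h 0 ≠ 0)
    (hlin : ∀ x, 0 < x → h x ≠ 0 → h x = h 0 - x)
    (hg : Tendsto (fun x => (h x - h 0) / x) (𝓝[>] 0) (𝓝 g)) : g = -1 := by
  have hcont : Tendsto h (𝓝[>] 0) (𝓝 (h 0)) := by
    have hmul := hg.mul (tendsto_nhdsWithin_of_tendsto_nhds (tendsto_id (x := 𝓝 (0 : ℝ))))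
    rw [mul_zero] at hmul
    have hsub : Tendsto (fun x => h x - h 0) (𝓝[>] 0) (𝓝 0) := by
      refine hmul.congr' ?_
      filter_upwards [self_mem_nhdsWithin] with x (hx : 0 < x)
      simp [div_mul_cancel₀ _ hx.ne']
    simpa using hsub.add_const (h 0)
  refine tendsto_nhds_unique hg (tendsto_const_nhds.congr' ?_)
  filter_upwards [self_mem_nhdsWithin, hcont.eventually_ne h0] with x (hx : 0 < x) hne
  rw [hlin x hx hne]
  field_simp
  ring

theorem rem_right_derivative_eq_one_general
    {Ω : Type*} [MeasurableSpace Ω] (μ : Measure Ω) [IsProbabilityMeasure μ]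
    (En : (N : ℕ) → Ω → (Fin N → Bool) → ℝ)
    (β : ℝ) (hβ : 0 < β)
    (f2 : ℝ → ℝ)
    -- the single-system free energy at 2β exists and equals −√(log 2)
    (hZ : Tendsto
      (fun N : ℕ => -(1 / (2 * β * N)) * ∫ ω, Real.log (remZ N (2 * β) (En N ω)) ∂μ)
      atTop (nhds (-Real.sqrt (Real.log 2))))
    -- the two-replica free energy exists for each λ
    (hf2 : ∀ lam : ℝ, Tendsto
      (fun N : ℕ => -(1 / (β * N)) * ∫ ω, Real.log (remZ2 N β lam (En N ω)) ∂μ)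
      atTop (nhds (f2 lam)))
    -- f^{(2)}(β,0) = 2 f(β) = −2√(log 2)
    (hf20 : f2 0 = -(2 * Real.sqrt (Real.log 2)))
    (g : ℝ)
    (hg : Tendsto (fun lam : ℝ => (f2 lam - f2 0) / lam)
      (nhdsWithin 0 (Set.Ioi 0)) (nhds g)) :
    -g = 1 := by
  have hsqrt : 0 < Real.sqrt (Real.log 2) := Real.sqrt_pos.mpr (Real.log_pos one_lt_two)
  have hf20_ne : f2 0 ≠ 0 := by rw [hf20]; linarith
  suffices g = -1 by rw [this, neg_neg]
  refine eq_neg_one_of_tendsto_slope hf20_ne (fun lam hlam hne => ?_) hg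
  obtain ⟨hlow, hup⟩ := remFreeEnergy2_limit_sandwich En hβ hlam.le hZ hf2
    (neg_ne_zero.mpr hsqrt.ne') hf20_ne hne
  rw [hf20] at hlow ⊢
  linarith

/-- (B.22): for the REM at β ≥ β_c = 2√(log 2), the right derivative of the
two-replica free energy at λ = 0 satisfies −f^{(2)}'₊(β,0) = 1. -/
theorem rem_right_derivative_eq_one
    {Ω : Type*} [MeasurableSpace Ω] (μ : Measure Ω) [IsProbabilityMeasure μ]
    (En : (N : ℕ) → Ω → (Fin N → Bool) → ℝ)
    (β : ℝ) (hβ : 0 < β) (hβc : 2 * Real.sqrt (Real.log 2) ≤ β)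
    (f2 : ℝ → ℝ) (hconc : ConcaveOn ℝ Set.univ f2)
    -- the single-system free energy at 2β exists and equals −√(log 2)
    (hZ : Tendsto
      (fun N : ℕ => -(1 / (2 * β * N)) * ∫ ω, Real.log (remZ N (2 * β) (En N ω)) ∂μ)
      atTop (nhds (-Real.sqrt (Real.log 2))))
    -- the two-replica free energy exists for each λ
    (hf2 : ∀ lam : ℝ, Tendsto
      (fun N : ℕ => -(1 / (β * N)) * ∫ ω, Real.log (remZ2 N β lam (En N ω)) ∂μ)
      atTop (nhds (f2 lam)))
    -- f^{(2)}(β,0) = 2 f(β) = −2√(log 2)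
    (hf20 : f2 0 = -(2 * Real.sqrt (Real.log 2)))
    (g : ℝ)
    (hg : Tendsto (fun lam : ℝ => (f2 lam - f2 0) / lam)
      (nhdsWithin 0 (Set.Ioi 0)) (nhds g)) :
    -g = 1 :=
  rem_right_derivative_eq_one_general μ En β hβ f2 hZ hf2 hf20 g hg
end
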